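/- For the block lower-triangular preconditioner M = [[diag(L_1,…,L_n), 0],[−(ω_1 I,…,ω_n I), D]] of the transport system A = [[diag(L_1,…,L_n), col(−Σ_s,…,−Σ_s)],[−(ω_1 I,…,ω_n I), I]], the (scalar-flux block of the) preconditioned error propagation matrix I − M⁻¹A restricted to φ equals I − D⁻¹S with S = I − Σ_d ω_d L_d⁻¹ Σ_s; in particular if D = S the iteration on φ converges in one step. -/

import Mathlib

/-!
Eliminating the angular-flux blocks is block Gaussian elimination: for the block lower-triangular
`M = [[B, 0], [C, D]]` and `A = [[B, U], [C, A₂₂]]` sharing the blocks `B` and `C`, the matrix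
`I - M⁻¹A` is `[[0, -B⁻¹U], [0, I - D⁻¹(A₂₂ - C B⁻¹ U)]]`, whose bottom-right block involves only
the Schur complement of `B` in `A`. For the transport system with `B = diag(L_d)`,
`C = (-ω_d I)_d` and `U = (-Σ_s)_d` that Schur complement is `S = I - Σ_d ω_d L_d⁻¹ Σ_s`.
-/

namespace Matrix

section Inverse

variable {R : Type*} [CommRing R] {m o : Type*} [Fintype m] [DecidableEq m] [Fintype o]
  [DecidableEq o] {M : o → Matrix m m R}

theorem blockDiagonal_mul_blockDiagonal_inv (hM : ∀ k, IsUnit (M k)) :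
    blockDiagonal M * blockDiagonal (fun k => (M k)⁻¹) = 1 := by
  rw [← blockDiagonal_mul, ← blockDiagonal_one]
  congr with k : 1
  exact mul_nonsing_inv _ ((isUnit_iff_isUnit_det _).mp (hM k))

theorem inv_blockDiagonal (hM : ∀ k, IsUnit (M k)) :
    (blockDiagonal M)⁻¹ = blockDiagonal fun k => (M k)⁻¹ :=
  inv_eq_right_inv (blockDiagonal_mul_blockDiagonal_inv hM)

theorem isUnit_blockDiagonal (hM : ∀ k, IsUnit (M k)) : IsUnit (blockDiagonal M) :=
  (isUnit_iff_isUnit_det _).mpr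
    (isUnit_det_of_right_inverse (blockDiagonal_mul_blockDiagonal_inv hM))

end Inverse

theorem one_sub_inv_fromBlocks_zero₁₂_mul_fromBlocks {R : Type*} [CommRing R] {m n : Type*}
    [Fintype m] [DecidableEq m] [Fintype n] [DecidableEq n] {B : Matrix m m R}
    {D : Matrix n n R} (hB : IsUnit B) (hD : IsUnit D) (U : Matrix m n R) (C : Matrix n m R)
    (A₂₂ : Matrix n n R) :
    1 - (fromBlocks B 0 C D)⁻¹ * fromBlocks B U C A₂₂ =
      fromBlocks 0 (-(B⁻¹ * U)) 0 (1 - D⁻¹ * (A₂₂ - C * B⁻¹ * U)) := by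
  have hBB : B⁻¹ * B = 1 := nonsing_inv_mul _ ((isUnit_iff_isUnit_det _).mp hB)
  rw [inv_fromBlocks_zero₁₂_of_isUnit_iff _ _ _ (iff_of_true hB hD), fromBlocks_multiply,
    ← fromBlocks_one, sub_eq_add_neg, fromBlocks_neg, fromBlocks_add]
  congr 1
  · simp [hBB]
  · simp
  · rw [Matrix.neg_mul, Matrix.mul_assoc _ B⁻¹, hBB, Matrix.mul_one, neg_add_cancel, neg_zero,
      zero_add]
  · simp only [Matrix.neg_mul, Matrix.mul_assoc, Matrix.mul_sub]
    abel

theorem row_mul_blockDiagonal_mul_col {R : Type*} [CommRing R] {m n o : Type*} [Fintype m]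
    [DecidableEq m] [Fintype o] [DecidableEq o] (a : o → R) (K : o → Matrix m m R)
    (X : Matrix m n R) :
    (of fun i p => a p.2 * (1 : Matrix m m R) i p.1 : Matrix m (m × o) R) * blockDiagonal K *
      (of fun p j => X p.1 j : Matrix (m × o) n R) = ∑ d, a d • (K d * X) := by
  have hrow : (of fun i p => a p.2 * (1 : Matrix m m R) i p.1 : Matrix m (m × o) R) *
      blockDiagonal K = (of fun i p => a p.2 * K p.2 i p.1 : Matrix m (m × o) R) := by
    ext i ⟨k, d⟩
    simp [mul_apply, Fintype.sum_prod_type, one_apply, blockDiagonal_apply, eq_comm]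
  ext i j
  rw [hrow, mul_apply, Fintype.sum_prod_type_right, sum_apply]
  simp [mul_apply, Finset.mul_sum, mul_assoc]

end Matrix

open Finset in
/-- For the block lower-triangular DSA preconditioner `M` of the transport
system `A`, the scalar-flux block of the error propagation matrix `I − M⁻¹A`
equals `I − D⁻¹S` (and the coupling from the angular-flux block vanishes);
in particular if `D = S` the induced iteration on `φ` converges in one step. -/
theorem dsa_error_propagation {n m : ℕ}
    (L : Fin n → Matrix (Fin m) (Fin m) ℂ) (hL : ∀ d, IsUnit (L d))
    (Ss D : Matrix (Fin m) (Fin m) ℂ) (ω : Fin n → ℂ) (hD : IsUnit D) :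
    let A : Matrix ((Fin m × Fin n) ⊕ Fin m) ((Fin m × Fin n) ⊕ Fin m) ℂ :=
      Matrix.fromBlocks (Matrix.blockDiagonal L)
        (fun p j => -Ss p.1 j)
        (fun i p => -(ω p.2) * (1 : Matrix (Fin m) (Fin m) ℂ) i p.1) 1
    let Mprec : Matrix ((Fin m × Fin n) ⊕ Fin m) ((Fin m × Fin n) ⊕ Fin m) ℂ :=
      Matrix.fromBlocks (Matrix.blockDiagonal L) 0
        (fun i p => -(ω p.2) * (1 : Matrix (Fin m) (Fin m) ℂ) i p.1) D
    let S : Matrix (Fin m) (Fin m) ℂ := 1 - ∑ d, ω d • ((L d)⁻¹ * Ss)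
    let E := (1 : Matrix ((Fin m × Fin n) ⊕ Fin m) ((Fin m × Fin n) ⊕ Fin m) ℂ)
      - Mprec⁻¹ * A
    (∀ i j : Fin m, E (Sum.inr i) (Sum.inr j) = ((1 : Matrix (Fin m) (Fin m) ℂ) - D⁻¹ * S) i j) ∧
    (∀ (i : Fin m) (p : Fin m × Fin n), E (Sum.inr i) (Sum.inl p) = 0) ∧
    (D = S → ∀ i j : Fin m, E (Sum.inr i) (Sum.inr j) = 0) := by
  intro A Mprec S E
  have hSchur : (Matrix.of fun i p => -(ω p.2) * (1 : Matrix (Fin m) (Fin m) ℂ) i p.1 :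
        Matrix (Fin m) (Fin m × Fin n) ℂ) * (Matrix.blockDiagonal L)⁻¹ *
      (Matrix.of fun p j => -Ss p.1 j : Matrix (Fin m × Fin n) (Fin m) ℂ) = 1 - S := by
    rw [Matrix.inv_blockDiagonal hL]
    refine (Matrix.row_mul_blockDiagonal_mul_col (fun d => -ω d) _ (-Ss)).trans ?_
    simp [S]
  have hE : E = _ := Matrix.one_sub_inv_fromBlocks_zero₁₂_mul_fromBlocks
    (Matrix.isUnit_blockDiagonal hL) hD (Matrix.of fun p j => -Ss p.1 j)
    (Matrix.of fun i p => -(ω p.2) * (1 : Matrix (Fin m) (Fin m) ℂ) i p.1) 1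
  rw [hSchur, sub_sub_cancel] at hE
  refine ⟨fun i j => by rw [hE]; rfl, fun i p => by rw [hE]; rfl, fun hDS i j => ?_⟩
  rw [hE, Matrix.fromBlocks_apply₂₂, ← hDS,
    Matrix.nonsing_inv_mul _ ((Matrix.isUnit_iff_isUnit_det D).mp hD), sub_self, Matrix.zero_apply]
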